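/- For every n ≥ 1, the sum over i from 1 to n of t_i · h_{2i} equals 1 - h_{2n+1}. -/

import Mathlib

def t (n : ℕ) : ℤ := (-1) ^ ((Nat.digits 2 n).sum)

def h : ℕ → ℤ
  | 0 => 0
  | 1 => 1
  | (n + 2) => t (n + 2) * h (n + 1) + h n

/-!
Appending the binary digit `1` flips the sign: `t (2i+1) = -t i`. Hence the recurrence at the odd
index `2i+3` reads `h (2i+3) = -t (i+1) h (2i+2) + h (2i+1)`, i.e. `t (i+1) h (2i+2)` is the
difference of consecutive odd-indexed terms, and the sum telescopes to `h 1 - h (2n+1)`.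
-/

lemma t_two_mul_add_one (i : ℕ) : t (2 * i + 1) = -t i := by
  rw [t, t, Nat.digits_def' (by norm_num) (by omega), Nat.mul_add_mod_self_left,
    Nat.mul_add_div (by norm_num)]
  simp [pow_add]

lemma h_add_two (n : ℕ) : h (n + 2) = t (n + 2) * h (n + 1) + h n := by
  rw [h]

lemma t_mul_h_two_mul_succ (i : ℕ) :
    t (i + 1) * h (2 * (i + 1)) = h (2 * i + 1) - h (2 * (i + 1) + 1) := by
  have hodd : t (2 * (i + 1) + 1) = -t (i + 1) := t_two_mul_add_one (i + 1)
  rw [show 2 * (i + 1) + 1 = 2 * i + 1 + 2 by ring] at hodd ⊢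
  rw [h_add_two, hodd, show 2 * i + 1 + 1 = 2 * (i + 1) by ring]
  ring

lemma sum_Icc_t_mul_h_two_mul (n : ℕ) :
    ∑ i ∈ Finset.Icc 1 n, t i * h (2 * i) = 1 - h (2 * n + 1) := by
  induction n with
  | zero => simp [h]
  | succ n ih =>
    rw [Finset.sum_Icc_succ_top (by omega), ih, t_mul_h_two_mul_succ]
    ring

theorem stmt17 : ∀ n : ℕ, 1 ≤ n → (∑ i ∈ Finset.Icc 1 n, t i * h (2 * i)) = 1 - h (2 * n + 1) :=
  fun n _ => sum_Icc_t_mul_h_two_mul n
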